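/- For any tree T on n vertices with maximum degree Δ, Alb(T) ≥ Δ(Δ−1), with equality if and only if T is a spider (a tree with at most one vertex of degree more than two). -/
import Mathlib

open Finset

/-- The Albertson irregularity index `Alb(G) = ∑_{uv∈E(G)} |d(u)-d(v)|`. -/
noncomputable def Alb {V : Type*} [Fintype V] (G : SimpleGraph V) [DecidableRel G.Adj] : ℝ :=
  (∑ u : V, ∑ v ∈ G.neighborFinset u, |(G.degree u : ℝ) - (G.degree v : ℝ)|) / 2

namespace StmtAux

open SimpleGraph

set_option linter.unusedSectionVars false

variable {V : Type*} [Fintype V] [DecidableEq V] {T : SimpleGraph V} [DecidableRel T.Adj]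

/-- The unique path between two vertices of a tree. -/
noncomputable def pth (hT : T.IsTree) (w v : V) : T.Walk w v :=
  (hT.existsUnique_path w v).choose

lemma pth_isPath (hT : T.IsTree) (w v : V) : (pth hT w v).IsPath :=
  (hT.existsUnique_path w v).choose_spec.1

lemma pth_unique (hT : T.IsTree) {w v : V} (q : T.Walk w v) (hq : q.IsPath) :
    q = pth hT w v :=
  (hT.existsUnique_path w v).choose_spec.2 q hq

lemma pth_self (hT : T.IsTree) (w : V) : pth hT w w = Walk.nil :=
  (pth_unique hT Walk.nil (by simp)).symm

lemma adj_pth (hT : T.IsTree) (w : V) {u v : V} (h : T.Adj u v) :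
    pth hT w u = (pth hT w v).concat h.symm ∨ pth hT w v = (pth hT w u).concat h := by
  by_cases hv : v ∈ (pth hT w u).support
  · by_cases hu : u ∈ (pth hT w v).support
    · exfalso
      have ht : (pth hT w v).takeUntil u hu = pth hT w u :=
        pth_unique hT _ ((pth_isPath hT w v).takeUntil hu)
      have hsp : ((pth hT w v).takeUntil u hu).support.Disjoint
          ((pth hT w v).dropUntil u hu).support.tail := by
        apply List.disjoint_of_nodup_append
        rw [← Walk.support_append, Walk.take_spec (pth hT w v) hu]
        exact (pth_isPath hT w v).support_nodup
      have h1 : v ∈ ((pth hT w v).takeUntil u hu).support := by rw [ht]; exact hv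
      have h2 : v ∈ ((pth hT w v).dropUntil u hu).support.tail := by
        have h3 : v ∈ ((pth hT w v).dropUntil u hu).support := Walk.end_mem_support _
        rw [Walk.support_eq_cons] at h3
        rcases List.mem_cons.mp h3 with h4 | h4
        · exact absurd h4 h.ne'
        · exact h4
      exact hsp h1 h2
    · left
      symm
      apply pth_unique
      rw [← Walk.isPath_reverse_iff, Walk.reverse_concat]
      exact (Walk.isPath_reverse_iff _ |>.mpr (pth_isPath hT w v)).cons
        (by rwa [Walk.support_reverse, List.mem_reverse])
  · right
    symm
    apply pth_unique
    rw [← Walk.isPath_reverse_iff, Walk.reverse_concat]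
    exact (Walk.isPath_reverse_iff _ |>.mpr (pth_isPath hT w u)).cons
      (by rwa [Walk.support_reverse, List.mem_reverse])

/-- The parent of a vertex with respect to the root `w`. -/
noncomputable def par (hT : T.IsTree) (w v : V) : V := (pth hT w v).reverse.getVert 1

lemma par_eq (hT : T.IsTree) (w : V) {u v : V} (h : T.Adj v u)
    (he : pth hT w u = (pth hT w v).concat h) : par hT w u = v := by
  unfold par
  rw [he, Walk.reverse_concat, Walk.getVert_cons_succ, Walk.getVert_zero]

lemma pth_ne_concat (hT : T.IsTree) (w : V) {v : V} (h : T.Adj v w) :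
    pth hT w w ≠ (pth hT w v).concat h := by
  intro hc
  have := congrArg Walk.length hc
  rw [pth_self, Walk.length_concat] at this
  simp at this

lemma pairs_card_le (hT : T.IsTree) (w : V) (S : Finset V) (hw : w ∈ S) :
    ((S ×ˢ S).filter fun p => T.Adj p.1 p.2).card ≤ 2 * (S.card - 1) := by
  classical
  set P := (S ×ˢ S).filter fun p => T.Adj p.1 p.2 with hP
  set child : V × V → V := fun p =>
    if h : T.Adj p.1 p.2 then
      (if pth hT w p.1 = (pth hT w p.2).concat h.symm then p.1 else p.2)
    else p.1 with hchild
  have hmaps : ∀ p ∈ P, child p ∈ S.erase w := by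
    intro p hp
    obtain ⟨hps, hadj⟩ := Finset.mem_filter.mp hp
    obtain ⟨h1, h2⟩ := Finset.mem_product.mp hps
    rw [Finset.mem_erase]
    simp only [hchild, dif_pos hadj]
    split_ifs with hcase
    · refine ⟨?_, h1⟩
      rintro rfl
      exact pth_ne_concat hT _ hadj.symm hcase
    · refine ⟨?_, h2⟩
      have hd := (adj_pth hT w hadj).resolve_left hcase
      rintro rfl
      exact pth_ne_concat hT _ hadj hd
  have hfib : ∀ c ∈ S.erase w, (P.filter fun p => child p = c).card ≤ 2 := by
    intro c _
    have hsub : P.filter (fun p => child p = c) ⊆ {(c, par hT w c), (par hT w c, c)} := by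
      intro p hp
      obtain ⟨hpP, hpc⟩ := Finset.mem_filter.mp hp
      obtain ⟨_, hadj⟩ := Finset.mem_filter.mp hpP
      simp only [hchild, dif_pos hadj] at hpc
      by_cases hcase : pth hT w p.1 = (pth hT w p.2).concat hadj.symm
      · rw [if_pos hcase] at hpc
        subst hpc
        have hpar : par hT w p.1 = p.2 := par_eq hT w hadj.symm hcase
        have hp1 : (p.1, par hT w p.1) = p := by rw [hpar]
        exact Finset.mem_insert.mpr (Or.inl hp1.symm)
      · rw [if_neg hcase] at hpc
        have hd := (adj_pth hT w hadj).resolve_left hcase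
        subst hpc
        have hpar : par hT w p.2 = p.1 := par_eq hT w hadj hd
        have hp1 : (par hT w p.2, p.2) = p := by rw [hpar]
        refine Finset.mem_insert.mpr (Or.inr ?_)
        rw [Finset.mem_singleton]
        exact hp1.symm
    calc (P.filter fun p => child p = c).card
        ≤ ({(c, par hT w c), (par hT w c, c)} : Finset (V × V)).card :=
          Finset.card_le_card hsub
      _ ≤ 2 := (Finset.card_insert_le _ _).trans (by simp)
  calc P.card ≤ 2 * (S.erase w).card :=
        Finset.card_le_mul_card_image_of_maps_to hmaps 2 hfib
    _ = 2 * (S.card - 1) := by rw [Finset.card_erase_of_mem hw]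

variable (T) in
/-- The number of adjacent (ordered) pairs `(u,v)` with `deg u > t ≥ deg v`. -/
def cutn (t : ℕ) : ℕ :=
  ∑ u ∈ univ.filter (fun u => t < T.degree u),
    ((T.neighborFinset u).filter (fun v => T.degree v ≤ t)).card

lemma sum_nbr_comm {M : Type*} [AddCommMonoid M] (f : V → V → M) :
    ∑ u : V, ∑ v ∈ T.neighborFinset u, f u v
      = ∑ u : V, ∑ v ∈ T.neighborFinset u, f v u := by
  have key : ∀ g : V → V → M, ∑ u : V, ∑ v ∈ T.neighborFinset u, g u v
      = ∑ u : V, ∑ v : V, if T.Adj u v then g u v else 0 := by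
    intro g
    refine Finset.sum_congr rfl fun u _ => ?_
    rw [neighborFinset_eq_filter, Finset.sum_filter]
  rw [key, key, Finset.sum_comm]
  refine Finset.sum_congr rfl fun v _ => Finset.sum_congr rfl fun u _ => ?_
  exact if_congr (T.adj_comm u v) rfl rfl

lemma sum_sub_eq {Δ : ℕ} (hΔ : ∀ v, T.degree v ≤ Δ) :
    ∑ u : V, ∑ v ∈ T.neighborFinset u, (T.degree u - T.degree v)
      = ∑ t ∈ range Δ, cutn T t := by
  have hpair : ∀ u v : V, T.degree u - T.degree v
      = ∑ t ∈ range Δ, if T.degree v ≤ t ∧ t < T.degree u then 1 else 0 := by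
    intro u v
    rw [← Finset.card_filter]
    have : (range Δ).filter (fun t => T.degree v ≤ t ∧ t < T.degree u)
        = Finset.Ico (T.degree v) (T.degree u) := by
      ext t
      simp only [mem_filter, mem_range, Finset.mem_Ico]
      have := hΔ u
      omega
    rw [this, Nat.card_Ico]
  calc ∑ u : V, ∑ v ∈ T.neighborFinset u, (T.degree u - T.degree v)
      = ∑ u : V, ∑ v ∈ T.neighborFinset u, ∑ t ∈ range Δ,
          if T.degree v ≤ t ∧ t < T.degree u then 1 else 0 := by
        exact Finset.sum_congr rfl fun u _ => Finset.sum_congr rfl fun v _ => hpair u v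
    _ = ∑ u : V, ∑ t ∈ range Δ, ∑ v ∈ T.neighborFinset u,
          if T.degree v ≤ t ∧ t < T.degree u then 1 else 0 :=
        Finset.sum_congr rfl fun u _ => Finset.sum_comm
    _ = ∑ t ∈ range Δ, ∑ u : V, ∑ v ∈ T.neighborFinset u,
          if T.degree v ≤ t ∧ t < T.degree u then 1 else 0 := Finset.sum_comm
    _ = ∑ t ∈ range Δ, cutn T t := by
        refine Finset.sum_congr rfl fun t _ => ?_
        rw [cutn, Finset.sum_filter]
        refine Finset.sum_congr rfl fun u _ => ?_
        by_cases h : t < T.degree u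
        · rw [if_pos h, Finset.card_filter]
          exact Finset.sum_congr rfl fun v _ => by simp [h]
        · rw [if_neg h]
          exact Finset.sum_eq_zero fun v _ => by simp [h]

lemma alb_eq {Δ : ℕ} (hΔ : ∀ v, T.degree v ≤ Δ) :
    Alb T = ((∑ t ∈ range Δ, cutn T t : ℕ) : ℝ) := by
  have habs : ∀ a b : ℕ, |(a : ℝ) - b| = (((a - b) + (b - a) : ℕ) : ℝ) := by
    intro a b
    rcases le_total a b with h | h
    · rw [Nat.sub_eq_zero_of_le h, zero_add, abs_sub_comm,
        abs_of_nonneg (sub_nonneg.mpr (Nat.cast_le.mpr h)), Nat.cast_sub h]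
    · rw [Nat.sub_eq_zero_of_le h, add_zero,
        abs_of_nonneg (sub_nonneg.mpr (Nat.cast_le.mpr h)), Nat.cast_sub h]
  unfold Alb
  simp_rw [habs]
  push_cast
  rw [Finset.sum_congr rfl fun u (_ : u ∈ univ) => Finset.sum_add_distrib]
  rw [Finset.sum_add_distrib]
  rw [sum_nbr_comm (fun u v => ((T.degree v - T.degree u : ℕ) : ℝ))]
  have h2 : ∑ u : V, ∑ v ∈ T.neighborFinset u, ((T.degree u - T.degree v : ℕ) : ℝ)
      = ((∑ t ∈ range Δ, cutn T t : ℕ) : ℝ) := by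
    rw [← sum_sub_eq hΔ]
    push_cast
    rfl
  rw [h2]
  push_cast
  ring

lemma pairs_eq (S : Finset V) :
    ∑ u ∈ S, ((T.neighborFinset u).filter (fun v => v ∈ S)).card
      = ((S ×ˢ S).filter fun p => T.Adj p.1 p.2).card := by
  rw [Finset.card_filter, Finset.sum_product]
  refine Finset.sum_congr rfl fun u _ => ?_
  have h : (T.neighborFinset u).filter (fun v => v ∈ S)
      = S.filter (fun v => T.Adj u v) := by
    ext v
    simp [mem_neighborFinset, and_comm]
  rw [h, Finset.card_filter]

lemma cutn_core (hT : T.IsTree) {t : ℕ} {z : V} (hz : t < T.degree z) :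
    ∑ u ∈ univ.filter (fun u => t < T.degree u), T.degree u
      ≤ cutn T t + 2 * ((univ.filter (fun u => t < T.degree u)).card - 1) := by
  set A := univ.filter (fun u => t < T.degree u) with hA
  have hzA : z ∈ A := by simp [hA, hz]
  have hsplit : ∀ u : V,
      ((T.neighborFinset u).filter (fun v => T.degree v ≤ t)).card
        + ((T.neighborFinset u).filter (fun v => v ∈ A)).card = T.degree u := by
    intro u
    have h1 : (T.neighborFinset u).filter (fun v => v ∈ A)
        = (T.neighborFinset u).filter (fun v => ¬ (T.degree v ≤ t)) := by
      refine Finset.filter_congr fun v _ => ?_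
      simp [hA, not_le]
    rw [h1, Finset.card_filter_add_card_filter_not, card_neighborFinset_eq_degree]
  have hsum : cutn T t + ∑ u ∈ A, ((T.neighborFinset u).filter (fun v => v ∈ A)).card
      = ∑ u ∈ A, T.degree u := by
    rw [cutn, ← Finset.sum_add_distrib]
    exact Finset.sum_congr rfl fun u _ => hsplit u
  have hpairs : ∑ u ∈ A, ((T.neighborFinset u).filter (fun v => v ∈ A)).card
      ≤ 2 * (A.card - 1) := by
    rw [pairs_eq]
    exact pairs_card_le hT z A hzA
  omega

lemma cutn_ge (hT : T.IsTree) {Δ : ℕ} {z : V} (hz : T.degree z = Δ) {t : ℕ}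
    (h1 : 1 ≤ t) (ht : t < Δ) : Δ ≤ cutn T t := by
  set A := univ.filter (fun u => t < T.degree u) with hA
  have hzA : z ∈ A := by simp [hA, hz, ht]
  have hcore := cutn_core hT (t := t) (z := z) (by omega)
  have hlow : T.degree z + 2 * (A.card - 1) ≤ ∑ u ∈ A, T.degree u := by
    rw [← Finset.add_sum_erase A (fun u => T.degree u) hzA]
    have h2 : (A.erase z).card • 2 ≤ ∑ u ∈ A.erase z, T.degree u := by
      refine Finset.card_nsmul_le_sum _ _ _ fun u hu => ?_
      have := (Finset.mem_filter.mp (Finset.mem_of_mem_erase hu)).2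
      omega
    have h3 : (A.erase z).card = A.card - 1 := Finset.card_erase_of_mem hzA
    simp only [smul_eq_mul] at h2
    omega
  rw [← hA] at hcore
  omega

lemma cutn_ge' (hT : T.IsTree) {Δ : ℕ} {z y : V} (hz : T.degree z = Δ)
    (hy : y ≠ z) (hy3 : 2 < T.degree y) (hΔ3 : 2 < Δ) : Δ + 1 ≤ cutn T 2 := by
  set A := univ.filter (fun u => 2 < T.degree u) with hA
  have hzA : z ∈ A := by simp [hA, hz, hΔ3]
  have hyA : y ∈ A.erase z := by simp [hA, hy, hy3]
  have hcore := cutn_core hT (t := 2) (z := z) (by omega)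
  have hlow : T.degree z + 3 * (A.card - 1) ≤ ∑ u ∈ A, T.degree u := by
    rw [← Finset.add_sum_erase A (fun u => T.degree u) hzA]
    have h2 : (A.erase z).card • 3 ≤ ∑ u ∈ A.erase z, T.degree u := by
      refine Finset.card_nsmul_le_sum _ _ _ fun u hu => ?_
      have := (Finset.mem_filter.mp (Finset.mem_of_mem_erase hu)).2
      omega
    have h3 : (A.erase z).card = A.card - 1 := Finset.card_erase_of_mem hzA
    simp only [smul_eq_mul] at h2
    omega
  have hcard : 1 ≤ A.card - 1 := by
    have := Finset.card_pos.mpr ⟨y, hyA⟩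
    rw [Finset.card_erase_of_mem hzA] at this
    omega
  rw [← hA] at hcore
  omega

lemma deg_pos (hT : T.IsTree) {z : V} (hz : 1 ≤ T.degree z) (v : V) :
    1 ≤ T.degree v := by
  by_cases hvz : v = z
  · rwa [hvz]
  · obtain ⟨p⟩ := hT.isConnected.preconnected v z
    cases p with
    | nil => exact absurd rfl hvz
    | cons h q =>
      rw [Nat.one_le_iff_ne_zero, ← Nat.pos_iff_ne_zero]
      exact T.degree_pos_iff_exists_adj v |>.mpr ⟨_, h⟩

lemma nbr_singleton {u v : V} (h : T.Adj u v) (hu : T.degree u = 1) :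
    T.neighborFinset u = {v} := by
  have hcard : (T.neighborFinset u).card = 1 := by
    rw [card_neighborFinset_eq_degree]; exact hu
  obtain ⟨a, ha⟩ := Finset.card_eq_one.mp hcard
  have hv : v ∈ T.neighborFinset u := (T.mem_neighborFinset u v).mpr h
  rw [ha] at hv ⊢
  rw [Finset.mem_singleton] at hv
  rw [hv]

lemma no_leaf_leaf (hT : T.IsTree) {z : V} (hz : 2 ≤ T.degree z) {u v : V}
    (h : T.Adj u v) (hu : T.degree u = 1) : 2 ≤ T.degree v := by
  have hvdeg : 1 ≤ T.degree v := deg_pos hT (z := z) (by omega) v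
  by_contra hlt
  have hv1 : T.degree v = 1 := by omega
  have hNu := nbr_singleton h hu
  have hNv := nbr_singleton h.symm hv1
  have huz : u ≠ z := fun e => by rw [e] at hu; omega
  have hp := pth_isPath hT u z
  set p := pth hT u z with hpdef
  clear_value p
  cases p with
  | nil => exact huz rfl
  | cons hadj q =>
    rename_i x
    have hxv : x = v := by
      have hx : x ∈ T.neighborFinset u := (T.mem_neighborFinset u x).mpr hadj
      rw [hNu, Finset.mem_singleton] at hx
      exact hx
    rw [Walk.cons_isPath_iff] at hp
    obtain ⟨hq, hus⟩ := hp
    cases q with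
    | nil =>
      subst hxv
      omega
    | cons hadj2 q2 =>
      rename_i y
      have hNx : T.neighborFinset x = {u} := by rw [hxv]; exact hNv
      have hyu : y = u := by
        have hy2 : y ∈ T.neighborFinset x := (T.mem_neighborFinset x y).mpr hadj2
        rw [hNx, Finset.mem_singleton] at hy2
        exact hy2
      subst hyu
      exact hus (by simp [Walk.support_cons])

lemma cutn_zero : cutn T 0 = 0 := by
  rw [cutn]
  refine Finset.sum_eq_zero fun u _ => ?_
  rw [Finset.card_eq_zero, Finset.filter_eq_empty_iff]
  intro v hv
  rw [mem_neighborFinset] at hv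
  have h0 : 0 < T.degree v := by
    rw [T.degree_pos_iff_exists_adj]
    exact ⟨u, hv.symm⟩
  omega

variable (T) in
lemma cutn_eq_card (t : ℕ) : cutn T t
    = ((univ ×ˢ univ).filter fun p : V × V =>
        T.Adj p.1 p.2 ∧ t < T.degree p.1 ∧ T.degree p.2 ≤ t).card := by
  rw [Finset.card_filter, Finset.sum_product, cutn, Finset.sum_filter]
  refine Finset.sum_congr rfl fun u _ => ?_
  by_cases h : t < T.degree u
  · rw [if_pos h, Finset.card_filter, neighborFinset_eq_filter, Finset.sum_filter]
    refine Finset.sum_congr rfl fun v _ => ?_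
    by_cases h2 : T.Adj u v <;> by_cases h3 : T.degree v ≤ t <;> simp [h, h2, h3]
  · rw [if_neg h]
    symm
    exact Finset.sum_eq_zero fun v _ => by simp [h]

lemma cutn_one_eq_leaves (hT : T.IsTree) {z : V} (hz2 : 2 ≤ T.degree z) :
    cutn T 1 = (univ.filter fun v => T.degree v = 1).card := by
  rw [cutn_eq_card]
  refine Finset.card_bij (fun p _ => p.2) ?_ ?_ ?_
  · intro p hp
    obtain ⟨-, hadj, -, hd⟩ := Finset.mem_filter.mp hp
    have : 1 ≤ T.degree p.2 := deg_pos hT (z := z) (by omega) p.2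
    simp only [Finset.mem_filter, Finset.mem_univ, true_and]
    omega
  · intro p hp q hq he
    obtain ⟨-, hadjp, -, hdp⟩ := Finset.mem_filter.mp hp
    obtain ⟨-, hadjq, -, hdq⟩ := Finset.mem_filter.mp hq
    have hdp1 : T.degree p.2 = 1 := by
      have : 1 ≤ T.degree p.2 := deg_pos hT (z := z) (by omega) p.2
      omega
    have h1 : p.1 ∈ T.neighborFinset p.2 := (T.mem_neighborFinset _ _).mpr hadjp.symm
    have he2 : p.2 = q.2 := he
    have h2 : q.1 ∈ T.neighborFinset p.2 := by
      rw [he2]; exact (T.mem_neighborFinset _ _).mpr hadjq.symm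
    rw [nbr_singleton hadjp.symm hdp1, Finset.mem_singleton] at h1 h2
    exact Prod.ext (h1.trans h2.symm) he2
  · intro v hv
    obtain ⟨-, hd⟩ := Finset.mem_filter.mp hv
    have hvz : v ≠ z := fun e => by rw [e] at hd; omega
    obtain ⟨u, hu⟩ := Finset.card_eq_one.mp
      ((card_neighborFinset_eq_degree (G := T) (v := v)).trans hd)
    have hadj : T.Adj v u := by
      rw [← mem_neighborFinset, hu]; exact Finset.mem_singleton_self u
    have hdu : 2 ≤ T.degree u := no_leaf_leaf hT hz2 hadj hd
    refine ⟨(u, v), Finset.mem_filter.mpr ⟨Finset.mem_product.mpr ⟨mem_univ _, mem_univ _⟩,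
      hadj.symm, ?_, ?_⟩, rfl⟩
    · show 1 < T.degree u
      omega
    · show T.degree v ≤ 1
      omega

lemma card_leaves (hT : T.IsTree) {Δ : ℕ} {z : V} (hz : T.degree z = Δ) (h2 : 2 ≤ Δ)
    (hsp : ∀ v, v ≠ z → T.degree v ≤ 2) :
    (univ.filter fun v => T.degree v = 1).card = Δ := by
  have hn : 1 ≤ Fintype.card V := Fintype.card_pos_iff.mpr ⟨z⟩
  have hedge : ∑ v : V, T.degree v = 2 * (Fintype.card V - 1) := by
    rw [T.sum_degrees_eq_twice_card_edges]
    have h3 := hT.card_edgeFinset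
    omega
  have hsplit : ∑ v : V, T.degree v = T.degree z + ∑ v ∈ univ.erase z, T.degree v := by
    rw [Finset.add_sum_erase univ (fun u => T.degree u) (mem_univ z)]
  have hfil : ∑ v ∈ univ.erase z, T.degree v
      = ∑ v ∈ (univ.erase z).filter (fun v => T.degree v = 1), T.degree v
        + ∑ v ∈ (univ.erase z).filter (fun v => ¬ T.degree v = 1), T.degree v :=
    (Finset.sum_filter_add_sum_filter_not _ _ _).symm
  have hL : (univ.filter fun v => T.degree v = 1)
      = (univ.erase z).filter (fun v => T.degree v = 1) := by
    ext v
    constructor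
    · intro hv
      have h := (Finset.mem_filter.mp hv).2
      refine Finset.mem_filter.mpr ⟨Finset.mem_erase.mpr ⟨fun e => ?_, mem_univ v⟩, h⟩
      rw [e] at h
      omega
    · intro hv
      exact Finset.mem_filter.mpr ⟨mem_univ v, (Finset.mem_filter.mp hv).2⟩
  have h1 : ∑ v ∈ (univ.erase z).filter (fun v => T.degree v = 1), T.degree v
      = ((univ.erase z).filter (fun v => T.degree v = 1)).card := by
    rw [Finset.sum_congr rfl (fun v hv => (Finset.mem_filter.mp hv).2), Finset.sum_const,
      smul_eq_mul, mul_one]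
  have h22 : ∑ v ∈ (univ.erase z).filter (fun v => ¬ T.degree v = 1), T.degree v
      = 2 * ((univ.erase z).filter (fun v => ¬ T.degree v = 1)).card := by
    rw [Finset.sum_congr rfl (fun v hv => ?_), Finset.sum_const, smul_eq_mul, mul_comm]
    obtain ⟨hv, hd⟩ := Finset.mem_filter.mp hv
    have hvz := Finset.mem_of_mem_erase hv
    have hne := (Finset.mem_erase.mp hv).1
    have hle := hsp v hne
    have hge : 1 ≤ T.degree v := deg_pos hT (z := z) (by omega) v
    omega
  have hcards : ((univ.erase z).filter (fun v => T.degree v = 1)).card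
      + ((univ.erase z).filter (fun v => ¬ T.degree v = 1)).card
      = Fintype.card V - 1 := by
    rw [Finset.card_filter_add_card_filter_not, Finset.card_erase_of_mem (mem_univ z),
      Finset.card_univ]
  rw [hL]
  omega

lemma cutn_two_up {Δ : ℕ} {z : V} (hz : T.degree z = Δ)
    (hsp : ∀ v, v ≠ z → T.degree v ≤ 2) {t : ℕ} (h2 : 2 ≤ t) (ht : t < Δ) :
    cutn T t = Δ := by
  have hA : univ.filter (fun u => t < T.degree u) = {z} := by
    ext v
    simp only [Finset.mem_filter, Finset.mem_univ, true_and, Finset.mem_singleton]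
    constructor
    · intro h
      by_contra hne
      have := hsp v hne
      omega
    · intro h
      rw [h, hz]; exact ht
  rw [cutn, hA, Finset.sum_singleton]
  have hfull : (T.neighborFinset z).filter (fun v => T.degree v ≤ t)
      = T.neighborFinset z := by
    refine Finset.filter_true_of_mem fun v hv => ?_
    rw [mem_neighborFinset] at hv
    have : v ≠ z := fun e => by rw [e] at hv; exact T.irrefl hv
    have := hsp v this
    omega
  rw [hfull, card_neighborFinset_eq_degree, hz]

end StmtAux

theorem stmt16 {V : Type*} [Fintype V] [DecidableEq V]
    (T : SimpleGraph V) [DecidableRel T.Adj] (hT : T.IsTree)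
    (Δ : ℕ) (hΔ : ∀ v : V, T.degree v ≤ Δ) (hex : ∃ v : V, T.degree v = Δ) :
    (Δ : ℝ) * ((Δ : ℝ) - 1) ≤ Alb T ∧
    (Alb T = (Δ : ℝ) * ((Δ : ℝ) - 1) ↔
      -- T is a spider: at most one vertex of degree more than two
      (Finset.univ.filter fun v : V => 2 < T.degree v).card ≤ 1) := by
  classical
  open StmtAux in
  obtain ⟨z, hz⟩ := hex
  have halb := StmtAux.alb_eq (T := T) hΔ
  by_cases h2 : 2 ≤ Δ
  · -- main case
    set N := ∑ t ∈ range Δ, StmtAux.cutn T t with hNdef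
    have hcast : (Δ : ℝ) * ((Δ : ℝ) - 1) = ((Δ * (Δ - 1) : ℕ) : ℝ) := by
      rw [Nat.cast_mul, Nat.cast_sub (show 1 ≤ Δ by omega), Nat.cast_one]
    have hsubI : Finset.Ico 1 Δ ⊆ range Δ := by
      intro t ht
      rw [Finset.mem_Ico] at ht
      rw [Finset.mem_range]
      omega
    have hlow : Δ * (Δ - 1) ≤ N := by
      have h1 : ∑ t ∈ Finset.Ico 1 Δ, StmtAux.cutn T t ≤ N :=
        Finset.sum_le_sum_of_subset hsubI
      have hb : (Finset.Ico 1 Δ).card • Δ ≤ ∑ t ∈ Finset.Ico 1 Δ, StmtAux.cutn T t :=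
        Finset.card_nsmul_le_sum _ _ _ fun t ht =>
          StmtAux.cutn_ge hT hz (Finset.mem_Ico.mp ht).1 (Finset.mem_Ico.mp ht).2
      rw [Nat.card_Ico, smul_eq_mul] at hb
      calc Δ * (Δ - 1) = (Δ - 1) * Δ := Nat.mul_comm _ _
        _ ≤ ∑ t ∈ Finset.Ico 1 Δ, StmtAux.cutn T t := hb
        _ ≤ N := h1
    refine ⟨?_, ?_, ?_⟩
    · rw [halb, hcast]
      exact_mod_cast hlow
    · -- equality implies spider
      intro heq
      by_contra hcard
      rw [not_le] at hcard
      obtain ⟨a, ha, b, hb, hab⟩ := Finset.one_lt_card.mp hcard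
      rw [Finset.mem_filter] at ha hb
      have hΔ3 : 2 < Δ := lt_of_lt_of_le ha.2 (hΔ a)
      have hy : ∃ y, y ≠ z ∧ 2 < T.degree y := by
        by_cases he : a = z
        · exact ⟨b, fun e => hab (he.trans e.symm), hb.2⟩
        · exact ⟨a, he, ha.2⟩
      obtain ⟨y, hyz, hy3⟩ := hy
      have hc2 : Δ + 1 ≤ StmtAux.cutn T 2 := StmtAux.cutn_ge' hT hz hyz hy3 hΔ3
      have h2m : (2 : ℕ) ∈ Finset.Ico 1 Δ := by
        rw [Finset.mem_Ico]
        omega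
      have hrest : ((Finset.Ico 1 Δ).erase 2).card • Δ
          ≤ ∑ t ∈ (Finset.Ico 1 Δ).erase 2, StmtAux.cutn T t :=
        Finset.card_nsmul_le_sum _ _ _ fun t ht => by
          have h := Finset.mem_Ico.mp (Finset.mem_of_mem_erase ht)
          exact StmtAux.cutn_ge hT hz h.1 h.2
      have hcarde : ((Finset.Ico 1 Δ).erase 2).card = Δ - 2 := by
        rw [Finset.card_erase_of_mem h2m, Nat.card_Ico]
        omega
      rw [hcarde, smul_eq_mul] at hrest
      have hsum1 : StmtAux.cutn T 2 + ∑ t ∈ (Finset.Ico 1 Δ).erase 2, StmtAux.cutn T t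
          = ∑ t ∈ Finset.Ico 1 Δ, StmtAux.cutn T t :=
        Finset.add_sum_erase _ _ h2m
      have harith : Δ * (Δ - 1) + 1 ≤ (Δ + 1) + (Δ - 2) * Δ := by
        obtain ⟨k, rfl⟩ : ∃ k, Δ = k + 3 := ⟨Δ - 3, by omega⟩
        have e1 : k + 3 - 1 = k + 2 := by omega
        have e2 : k + 3 - 2 = k + 1 := by omega
        rw [e1, e2]
        exact le_of_eq (by ring)
      have hNlow : Δ * (Δ - 1) + 1 ≤ N := by
        calc Δ * (Δ - 1) + 1 ≤ (Δ + 1) + (Δ - 2) * Δ := harith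
          _ ≤ StmtAux.cutn T 2 + ∑ t ∈ (Finset.Ico 1 Δ).erase 2, StmtAux.cutn T t :=
              Nat.add_le_add hc2 hrest
          _ = ∑ t ∈ Finset.Ico 1 Δ, StmtAux.cutn T t := hsum1
          _ ≤ N := Finset.sum_le_sum_of_subset hsubI
      have hNP : N = Δ * (Δ - 1) := by
        have : ((N : ℕ) : ℝ) = ((Δ * (Δ - 1) : ℕ) : ℝ) := by
          rw [← halb, heq, hcast]
        exact_mod_cast this
      rw [hNP] at hNlow
      omega
    · -- spider implies equality
      intro hcard
      have hsp : ∀ v, v ≠ z → T.degree v ≤ 2 := by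
        intro v hv
        by_contra hgt
        rw [not_le] at hgt
        have hΔ3 : 2 < Δ := lt_of_lt_of_le hgt (hΔ v)
        have hz2 : z ∈ Finset.univ.filter (fun v : V => 2 < T.degree v) := by
          rw [Finset.mem_filter]
          exact ⟨mem_univ _, by omega⟩
        have hv2 : v ∈ Finset.univ.filter (fun v : V => 2 < T.degree v) := by
          rw [Finset.mem_filter]
          exact ⟨mem_univ _, hgt⟩
        have := Finset.one_lt_card.mpr ⟨v, hv2, z, hz2, hv⟩
        omega
      have hcut1 : StmtAux.cutn T 1 = Δ := by
        rw [StmtAux.cutn_one_eq_leaves hT (z := z) (by omega)]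
        exact StmtAux.card_leaves hT hz h2 hsp
      have hIco2 : ∑ t ∈ Finset.Ico 2 Δ, StmtAux.cutn T t = (Δ - 2) * Δ := by
        rw [Finset.sum_congr rfl fun t ht =>
          StmtAux.cutn_two_up hz hsp (Finset.mem_Ico.mp ht).1 (Finset.mem_Ico.mp ht).2,
          Finset.sum_const, Nat.card_Ico, smul_eq_mul]
      have hN : N = Δ + (Δ - 2) * Δ := by
        calc N = ∑ t ∈ Finset.Ico 0 Δ, StmtAux.cutn T t := by rw [hNdef, Finset.range_eq_Ico]
          _ = StmtAux.cutn T 0 + ∑ t ∈ Finset.Ico 1 Δ, StmtAux.cutn T t :=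
              Finset.sum_eq_sum_Ico_succ_bot (by omega) _
          _ = StmtAux.cutn T 0 + (StmtAux.cutn T 1 + ∑ t ∈ Finset.Ico 2 Δ, StmtAux.cutn T t) := by
              rw [Finset.sum_eq_sum_Ico_succ_bot (show 1 < Δ by omega)]
          _ = Δ + (Δ - 2) * Δ := by rw [StmtAux.cutn_zero, hcut1, hIco2, zero_add]
      have harith2 : Δ + (Δ - 2) * Δ = Δ * (Δ - 1) := by
        obtain ⟨k, rfl⟩ : ∃ k, Δ = k + 2 := ⟨Δ - 2, by omega⟩
        have e1 : k + 2 - 2 = k := by omega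
        have e2 : k + 2 - 1 = k + 1 := by omega
        rw [e1, e2]
        ring
      rw [halb, hN, harith2, hcast]
  · -- degenerate case Δ ≤ 1
    have hAlb0 : Alb T = 0 := by
      rw [halb]
      rcases (show Δ = 0 ∨ Δ = 1 by omega) with h | h
      · subst h
        simp
      · subst h
        rw [Finset.sum_range_one, StmtAux.cutn_zero]
        simp
    have hbound : (Δ : ℝ) * ((Δ : ℝ) - 1) = 0 := by
      rcases (show Δ = 0 ∨ Δ = 1 by omega) with h | h <;> subst h <;> norm_num
    have hspider : (Finset.univ.filter fun v : V => 2 < T.degree v).card ≤ 1 := by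
      have : (Finset.univ.filter fun v : V => 2 < T.degree v) = ∅ := by
        rw [Finset.filter_eq_empty_iff]
        intro v _
        have := hΔ v
        omega
      rw [this]
      simp
    refine ⟨by rw [hAlb0, hbound], ?_, fun _ => by rw [hAlb0, hbound]⟩
    intro _
    exact hspider
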